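/- arXiv:2109.15133 — 2 statements merged into one kernel-verified Lean document; each statement's English description precedes it below -/
import Mathlib

section
/- Assume (A1) and (A2), let h ∈ (0,h̄), and suppose 𝔠̃ · sup_{z∈𝔅} ‖DF(z)‖_op < 1. Let Γ(t;v^h) = ∫₀ᵗ DF(y_*^h(s)) v^h(s) ds and w_*^h[y_*^h] = Π_h w_*[y_*^h]. Then there exists a unique v̂^h ∈ X^h satisfying v̂^h − Π_h Γ(·;v̂^h) = y_*^h − w_*^h[y_*^h], and moreover ‖v̂^h‖_X ≤ ‖y_*^h − w_*^h[y_*^h]‖_X / (1 − 𝔠̃ · sup_{z∈𝔅} ‖DF(z)‖_op). -/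
open MeasureTheory Set
open scoped RealInnerProductSpace

noncomputable section

/-- `ℝ^d`. -/
abbrev Euc (d : ℕ) := EuclideanSpace ℝ (Fin d)

/-- `(u, u')` represents an element of `X = H¹(0,T;ℝ^d)`: `u` is absolutely continuous
(equal to the integral of its a.e. derivative `u'`) and `u' ∈ L²(0,T;ℝ^d)`. -/
def MemX {d : ℕ} (T : ℝ) (u u' : ℝ → Euc d) : Prop :=
  MemLp u' 2 (volume.restrict (Icc (0:ℝ) T)) ∧
  ∀ t ∈ Icc (0:ℝ) T, u t = u 0 + ∫ s in (0:ℝ)..t, u' s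

/-- The inner product `⟨·,·⟩_X` on `X`. -/
def innerX {d : ℕ} (T : ℝ) (u u' v v' : ℝ → Euc d) : ℝ :=
  (∫ t in (0:ℝ)..T, ⟪u' t, v' t⟫) + ⟪u 0, v 0⟫

/-- The energy norm `‖·‖_X` on `X`. -/
def normX {d : ℕ} (T : ℝ) (u u' : ℝ → Euc d) : ℝ :=
  Real.sqrt (innerX T u u' u u')

/-- The `L²(0,T;ℝ^d)` norm. -/
def L2norm {d : ℕ} (T : ℝ) (w : ℝ → Euc d) : ℝ :=
  Real.sqrt (∫ t in (0:ℝ)..T, ‖w t‖ ^ 2)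

/-- The least-squares objective `J(y; F, f, g)`. -/
def Jfun {d : ℕ} (T : ℝ) (F : Euc d → Euc d) (f : ℝ → Euc d) (g : Euc d)
    (y y' : ℝ → Euc d) : ℝ :=
  (1/2) * (∫ t in (0:ℝ)..T, ‖y' t - F (y t) - f t‖ ^ 2) + (1/2) * ‖y 0 - g‖ ^ 2

/-- A partition `0 = τ₀ < τ₁ < ⋯ < τ_N = T` of `[0,T]`. -/
structure TPartition (T : ℝ) where
  N : ℕ
  τ : ℕ → ℝ
  hN : 0 < N
  left : τ 0 = 0
  right : τ N = T
  mono : ∀ i < N, τ i < τ (i + 1)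

/-- The mesh size `h = max_i (τ_{i+1} - τ_i)` of a partition. -/
def TPartition.mesh {T : ℝ} (P : TPartition T) : ℝ :=
  (Finset.range P.N).sup' (Finset.nonempty_range_iff.mpr P.hN.ne') fun i => P.τ (i + 1) - P.τ i

/-- `v` is (on `[0,T]`) piecewise affine w.r.t. the partition `P`,
i.e. `v` belongs to the piecewise linear finite element space `X^h`. -/
def PWLinear {d : ℕ} {T : ℝ} (P : TPartition T) (v : ℝ → Euc d) : Prop :=
  ∀ i < P.N, ∃ a b : Euc d, ∀ t ∈ Icc (P.τ i) (P.τ (i + 1)), v t = a + t • b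

/-- `(p, p')` is the orthogonal projection `Π_h (u,u')` of `(u, u') ∈ X` onto the piecewise
linear finite element space `X^h` attached to the partition `P`. -/
def IsProjX {d : ℕ} {T : ℝ} (P : TPartition T) (u u' p p' : ℝ → Euc d) : Prop :=
  MemX T p p' ∧ PWLinear P p ∧
  ∀ v v' : ℝ → Euc d, MemX T v v' → PWLinear P v →
    innerX T (fun t => u t - p t) (fun t => u' t - p' t) v v' = 0

/-- `(y, y')` is a strong solution of the IVP `y' = F(y) + f(t)`, `y(0) = g`. -/
def IsStrongSol {d : ℕ} (T : ℝ) (F : Euc d → Euc d) (f : ℝ → Euc d) (g : Euc d)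
    (y y' : ℝ → Euc d) : Prop :=
  MemX T y y' ∧ y 0 = g ∧ ∀ᵐ t ∂(volume.restrict (Ioc (0:ℝ) T)), y' t = F (y t) + f t

/-- `(y, y')` is an lsfem solution: a global minimizer of `J(·;F,f,g)` over `X^h`. -/
def IsLSFEMSol {d : ℕ} (T : ℝ) (F : Euc d → Euc d) (f : ℝ → Euc d) (g : Euc d)
    (P : TPartition T) (y y' : ℝ → Euc d) : Prop :=
  MemX T y y' ∧ PWLinear P y ∧
  ∀ z z' : ℝ → Euc d, MemX T z z' → PWLinear P z →
    Jfun T F f g y y' ≤ Jfun T F f g z z'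

/-- `c` is the smallest constant with `max_{t∈[0,T]} ‖u(t)‖ ≤ c ‖u‖_X` for all `u ∈ X`. -/
def IsEmbC (d : ℕ) (T : ℝ) (c : ℝ) : Prop :=
  IsLeast {a : ℝ | ∀ u u' : ℝ → Euc d, MemX T u u' →
    ∀ t ∈ Icc (0:ℝ) T, ‖u t‖ ≤ a * normX T u u'} c

/-- `c` is the smallest constant with `‖u‖_{L²} ≤ c ‖u‖_X` for all `u ∈ X`. -/
def IsEmbL2 (d : ℕ) (T : ℝ) (c : ℝ) : Prop :=
  IsLeast {a : ℝ | ∀ u u' : ℝ → Euc d, MemX T u u' → L2norm T u ≤ a * normX T u u'} c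

/-- The smallness bound `1/√(2T² + T + c² + √((2T² + T + c²)² + 2Tc²(1+2T)))` from (A2). -/
def A2bound (T c : ℝ) : ℝ :=
  1 / Real.sqrt (2*T^2 + T + c^2 + Real.sqrt ((2*T^2 + T + c^2)^2 + 2*T*c^2*(1+2*T)))

/-!
In one dimension the `X`-orthogonal projection `Π_h` onto `X^h` is nodal interpolation, and
interpolation does not increase the `X`-norm. Since `y_*^h` stays in `𝔅`, `Γ(·; v)` has `X`-norm
`‖DF(y_*^h) v‖_{L²} ≤ s 𝔠̃ ‖v‖_X` with `s = sup_𝔅 ‖DF‖`, so `Π_h Γ` is a contraction of `X^h`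
with constant `𝔠̃ s < 1`. Hence `I - Π_h Γ` is injective on the finite-dimensional space `X^h`,
thus bijective, and `‖v̂^h‖_X ≤ 𝔠̃ s ‖v̂^h‖_X + ‖y_*^h - w_*^h‖_X` gives the bound.
-/

theorem LinearMap.exists_unique_sub_apply_eq_of_contracting {V : Type*} [AddCommGroup V]
    [Module ℝ V] [FiniteDimensional ℝ V] (A : V →ₗ[ℝ] V) {N : V → ℝ} {κ : ℝ} (hκ : κ < 1)
    (hN_nonneg : ∀ x, 0 ≤ N x) (hN_eq_zero : ∀ x, N x = 0 → x = 0)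
    (hN_add : ∀ x y, N (x + y) ≤ N x + N y) (hA : ∀ x, N (A x) ≤ κ * N x) (b : V) :
    ∃ x, x - A x = b ∧ (∀ x', x' - A x' = b → x' = x) ∧ N x ≤ N b / (1 - κ) := by
  have hinj : Function.Injective (LinearMap.id - A : V →ₗ[ℝ] V) := by
    refine (injective_iff_map_eq_zero _).mpr fun x hx => hN_eq_zero x ?_
    have hAx : A x = x := (sub_eq_zero.mp hx).symm
    have h := hA x
    rw [hAx] at h
    nlinarith [hN_nonneg x]
  obtain ⟨x, hx⟩ := LinearMap.injective_iff_surjective.mp hinj b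
  refine ⟨x, hx, fun x' hx' => hinj (hx'.trans hx.symm), ?_⟩
  rw [le_div_iff₀ (sub_pos.mpr hκ)]
  have hxb : A x + b = x := by rw [← hx]; simp
  have := hN_add (A x) b
  rw [hxb] at this
  linarith [hA x]

lemma norm_intervalIntegral_sq_le {E : Type*} [NormedAddCommGroup E] [NormedSpace ℝ E]
    [CompleteSpace E] {f : ℝ → E} {a b : ℝ} (hab : a < b)
    (hf : MemLp f 2 (volume.restrict (Ioc a b))) :
    ‖∫ t in a..b, f t‖ ^ 2 ≤ (b - a) * ∫ t in a..b, ‖f t‖ ^ 2 := by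
  have hjensen := (convexOn_univ_norm.pow (fun _ _ => norm_nonneg _) 2).map_set_average_le
    (f := f) (μ := volume) (t := Ioc a b) (continuous_norm.pow 2).continuousOn isClosed_univ
    (by simpa using hab) (by simp) (by simp) (hf.integrable one_le_two)
    (hf.integrable_norm_pow two_ne_zero)
  simp only [setAverage_eq, Real.volume_real_Ioc_of_le hab.le, Pi.pow_apply, norm_smul,
    smul_eq_mul, mul_pow, norm_inv, Real.norm_eq_abs, abs_of_pos (sub_pos.mpr hab)] at hjensen
  rw [intervalIntegral.integral_of_le hab.le, intervalIntegral.integral_of_le hab.le]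
  have hba : 0 < b - a := sub_pos.mpr hab
  have := mul_le_mul_of_nonneg_left hjensen (sq_nonneg (b - a))
  field_simp at this
  nlinarith [this]

lemma ContinuousOn.memLp_Icc {E : Type*} [NormedAddCommGroup E] {f : ℝ → E} {a b : ℝ}
    (hf : ContinuousOn f (Icc a b)) (p : ENNReal) : MemLp f p (volume.restrict (Icc a b)) := by
  obtain ⟨C, hC⟩ := isCompact_Icc.exists_bound_of_continuousOn hf
  exact MemLp.of_bound (hf.aestronglyMeasurable measurableSet_Icc) C
    ((ae_restrict_iff' measurableSet_Icc).mpr (ae_of_all _ hC))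

lemma bddAbove_image_tube {E : Type*} [NormedAddCommGroup E] [ProperSpace E] {y : ℝ → E}
    {a b : ℝ} (hy : ContinuousOn y (Icc a b)) {g : E → ℝ} (hg : Continuous g) (ρ : ℝ) :
    BddAbove (g '' {p | ∃ t ∈ Icc a b, ‖p - y t‖ < ρ}) := by
  have hK : IsCompact (Metric.cthickening ρ (y '' Icc a b)) :=
    (isCompact_Icc.image_of_continuousOn hy).cthickening
  refine (hK.image hg).bddAbove.mono (image_mono fun p ⟨t, ht, hpt⟩ => ?_)
  exact Metric.mem_cthickening_of_dist_le p (y t) _ _ ⟨t, ht, rfl⟩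
    (by rw [dist_eq_norm]; exact hpt.le)

lemma Fin.clamp_of_le {j n : ℕ} (h : j ≤ n) : Fin.clamp j n = ⟨j, Nat.lt_succ_of_le h⟩ :=
  Fin.ext (min_eq_left h)

namespace TPartition

variable {T : ℝ} (P : TPartition T)

lemma τ_mono {i j : ℕ} (hij : i ≤ j) (hj : j ≤ P.N) : P.τ i ≤ P.τ j := by
  induction j, hij using Nat.le_induction with
  | base => rfl
  | succ n _ ih => exact (ih (by omega)).trans (P.mono n (by omega)).le

lemma τ_nonneg {i : ℕ} (hi : i ≤ P.N) : 0 ≤ P.τ i := by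
  simpa [P.left] using P.τ_mono (Nat.zero_le i) hi

lemma τ_le {i : ℕ} (hi : i ≤ P.N) : P.τ i ≤ T := by
  simpa [P.right] using P.τ_mono hi le_rfl

lemma T_pos (P : TPartition T) : 0 < T := by
  simpa [P.left] using (P.mono 0 P.hN).trans_le (P.τ_le P.hN)

lemma τ_sub_pos {i : ℕ} (hi : i < P.N) : 0 < P.τ (i + 1) - P.τ i :=
  sub_pos.mpr (P.mono i hi)

lemma Icc_τ_subset {i : ℕ} (hi : i < P.N) : Icc (P.τ i) (P.τ (i + 1)) ⊆ Icc 0 T :=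
  Icc_subset_Icc (P.τ_nonneg hi.le) (P.τ_le hi)

lemma exists_mem_Ioc_τ {t : ℝ} (ht : t ∈ Ioc 0 T) : ∃ i < P.N, t ∈ Ioc (P.τ i) (P.τ (i + 1)) := by
  classical
  set j := Nat.findGreatest (fun i => P.τ i < t) P.N
  have hj : P.τ j < t := Nat.findGreatest_spec (P := fun i => P.τ i < t) (Nat.zero_le _)
    (by simpa [P.left] using ht.1)
  have hjN : j < P.N := by
    refine (Nat.findGreatest_le P.N).lt_of_ne fun h => ?_
    rw [show j = P.N from h, P.right] at hj
    exact hj.not_ge ht.2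
  exact ⟨j, hjN, hj, not_lt.mp fun h => Nat.findGreatest_is_greatest (Nat.lt_succ_self j) hjN h⟩

lemma exists_mem_Icc_τ {t : ℝ} (ht : t ∈ Icc 0 T) : ∃ i < P.N, t ∈ Icc (P.τ i) (P.τ (i + 1)) := by
  rcases ht.1.eq_or_lt with rfl | h0
  · exact ⟨0, P.hN, by simpa [P.left] using P.τ_nonneg P.hN⟩
  · obtain ⟨i, hi, hmem⟩ := P.exists_mem_Ioc_τ ⟨h0, ht.2⟩
    exact ⟨i, hi, Ioc_subset_Icc_self hmem⟩

lemma sum_integral_τ {F : Type*} [NormedAddCommGroup F] [NormedSpace ℝ F] {f : ℝ → F}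
    (hf : ∀ i < P.N, IntervalIntegrable f volume (P.τ i) (P.τ (i + 1))) :
    ∑ i ∈ Finset.range P.N, ∫ t in P.τ i..P.τ (i + 1), f t = ∫ t in 0..T, f t := by
  simpa [P.left, P.right] using intervalIntegral.sum_integral_adjacent_intervals hf

section Interpolation

variable {E : Type*} [NormedAddCommGroup E] [NormedSpace ℝ E]

def slope (c : ℕ → E) (i : ℕ) : E :=
  (P.τ (i + 1) - P.τ i)⁻¹ • (c (i + 1) - c i)

def ramp (i : ℕ) (t : ℝ) : ℝ :=
  min (max (t - P.τ i) 0) (P.τ (i + 1) - P.τ i)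

/-- The piecewise affine interpolant of the nodal values `c 0, …, c N`, written with ramps so
that it is defined and continuous on all of `ℝ`. -/
def interp (c : ℕ → E) (t : ℝ) : E :=
  c 0 + ∑ i ∈ Finset.range P.N, P.ramp i t • P.slope c i

def interpDeriv (c : ℕ → E) (t : ℝ) : E :=
  ∑ i ∈ Finset.range P.N, (Ioc (P.τ i) (P.τ (i + 1))).indicator (fun _ => P.slope c i) t

/-- The squared `X`-norm of `interp c`, see `normX_interp`. -/
def energy (c : ℕ → E) : ℝ :=
  ∑ i ∈ Finset.range P.N, (P.τ (i + 1) - P.τ i) * ‖P.slope c i‖ ^ 2 + ‖c 0‖ ^ 2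

variable {P}

lemma slope_congr {c e : ℕ → E} (h : ∀ j ≤ P.N, c j = e j) {i : ℕ} (hi : i < P.N) :
    P.slope c i = P.slope e i := by
  rw [slope, slope, h i hi.le, h (i + 1) hi]

lemma interp_congr {c e : ℕ → E} (h : ∀ j ≤ P.N, c j = e j) : P.interp c = P.interp e := by
  ext1 t
  rw [interp, interp, h 0 (Nat.zero_le _)]
  congr 1
  exact Finset.sum_congr rfl fun i hi => by rw [slope_congr h (Finset.mem_range.mp hi)]

lemma energy_congr {c e : ℕ → E} (h : ∀ j ≤ P.N, c j = e j) : P.energy c = P.energy e := by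
  rw [energy, energy, h 0 (Nat.zero_le _)]
  congr 1
  exact Finset.sum_congr rfl fun i hi => by rw [slope_congr h (Finset.mem_range.mp hi)]

variable (P)

lemma slope_add (c e : ℕ → E) (i : ℕ) : P.slope (c + e) i = P.slope c i + P.slope e i := by
  simp only [slope, Pi.add_apply, ← smul_add, add_sub_add_comm]

lemma slope_smul (a : ℝ) (c : ℕ → E) (i : ℕ) : P.slope (a • c) i = a • P.slope c i := by
  simp only [slope, Pi.smul_apply, ← smul_sub, smul_comm a]

lemma slope_sub (c e : ℕ → E) (i : ℕ) : P.slope (c - e) i = P.slope c i - P.slope e i := by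
  simp only [slope, Pi.sub_apply, ← smul_sub, sub_sub_sub_comm]

lemma interp_add (c e : ℕ → E) : P.interp (c + e) = P.interp c + P.interp e := by
  ext1 t
  simp only [interp, slope_add, smul_add, Finset.sum_add_distrib, Pi.add_apply]
  abel

lemma interp_smul (a : ℝ) (c : ℕ → E) : P.interp (a • c) = a • P.interp c := by
  ext1 t
  simp only [interp, slope_smul, smul_comm (P.ramp _ t) a, ← Finset.smul_sum, Pi.smul_apply,
    smul_add]

lemma interp_sub (c e : ℕ → E) : P.interp (c - e) = P.interp c - P.interp e := by
  ext1 t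
  simp only [interp, slope_sub, smul_sub, Finset.sum_sub_distrib, Pi.sub_apply]
  abel

lemma continuous_interp (c : ℕ → E) : Continuous (P.interp c) :=
  continuous_const.add <| continuous_finsetSum _ fun _ _ =>
    (((continuous_id.sub continuous_const).max continuous_const).min continuous_const).smul
      continuous_const

lemma interp_of_mem_Icc (c : ℕ → E) {i : ℕ} (hi : i < P.N) {t : ℝ}
    (ht : t ∈ Icc (P.τ i) (P.τ (i + 1))) : P.interp c t = c i + (t - P.τ i) • P.slope c i := by
  have hafter : ∀ j ∈ Finset.range P.N, j ∉ Finset.range (i + 1) →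
      P.ramp j t • P.slope c j = 0 := by
    intro j hj hji
    have : t ≤ P.τ j := ht.2.trans <| P.τ_mono (by simpa using hji) (Finset.mem_range.mp hj).le
    rw [ramp, max_eq_right (by linarith), min_eq_left (P.τ_sub_pos (by simpa using hj)).le,
      zero_smul]
  have hbefore : ∀ j ∈ Finset.range i, P.ramp j t • P.slope c j = c (j + 1) - c j := by
    intro j hj
    have hji : j < i := Finset.mem_range.mp hj
    have := P.τ_mono (Nat.succ_le_of_lt hji) hi.le
    rw [ramp, max_eq_left (by linarith [P.mono j (hji.trans hi), ht.1]),
      min_eq_right (by linarith [ht.1]), slope, smul_smul,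
      mul_inv_cancel₀ (P.τ_sub_pos (hji.trans hi)).ne', one_smul]
  have hcurrent : P.ramp i t = t - P.τ i := by
    rw [ramp, max_eq_left (by linarith [ht.1]), min_eq_left (by linarith [ht.2])]
  rw [interp, ← Finset.sum_subset (Finset.range_subset_range.mpr hi) hafter,
    Finset.sum_range_succ, Finset.sum_congr rfl hbefore, Finset.sum_range_sub c, hcurrent]
  abel

lemma interp_τ (c : ℕ → E) {j : ℕ} (hj : j ≤ P.N) : P.interp c (P.τ j) = c j := by
  rcases hj.lt_or_eq with hj | rfl
  · simp [P.interp_of_mem_Icc c hj ⟨le_rfl, (P.mono j hj).le⟩]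
  · obtain ⟨n, hn⟩ := Nat.exists_eq_add_of_lt P.hN
    rw [zero_add] at hn
    have hnN : n < P.N := by omega
    rw [hn, P.interp_of_mem_Icc c (hn ▸ hnN) ⟨(P.mono n (hn ▸ hnN)).le, le_rfl⟩, slope, smul_smul,
      mul_inv_cancel₀ (P.τ_sub_pos (hn ▸ hnN)).ne', one_smul, add_sub_cancel]

lemma interp_zero (c : ℕ → E) : P.interp c 0 = c 0 := by
  simpa [P.left] using P.interp_τ c (Nat.zero_le _)

lemma interpDeriv_of_mem_Ioc (c : ℕ → E) {i : ℕ} (hi : i < P.N) {t : ℝ}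
    (ht : t ∈ Ioc (P.τ i) (P.τ (i + 1))) : P.interpDeriv c t = P.slope c i := by
  rw [interpDeriv, Finset.sum_eq_single_of_mem i (Finset.mem_range.mpr hi), indicator_of_mem ht]
  intro j hj hji
  refine indicator_of_notMem (fun htj => ?_) _
  rcases hji.lt_or_gt with h | h
  · linarith [htj.2, ht.1, P.τ_mono (Nat.succ_le_of_lt h) hi.le]
  · linarith [htj.1, ht.2, P.τ_mono (Nat.succ_le_of_lt h) (Finset.mem_range.mp hj).le]

lemma energy_nonneg (c : ℕ → E) : 0 ≤ P.energy c :=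
  add_nonneg (Finset.sum_nonneg fun _ hi =>
    mul_nonneg (P.τ_sub_pos (Finset.mem_range.mp hi)).le (sq_nonneg _)) (sq_nonneg _)

lemma eq_zero_of_energy_eq_zero {c : ℕ → E} (h : P.energy c = 0) : ∀ j ≤ P.N, c j = 0 := by
  have hterm : ∀ i ∈ Finset.range P.N, 0 ≤ (P.τ (i + 1) - P.τ i) * ‖P.slope c i‖ ^ 2 :=
    fun i hi => mul_nonneg (P.τ_sub_pos (Finset.mem_range.mp hi)).le (sq_nonneg _)
  obtain ⟨hsum, hc0⟩ := (add_eq_zero_iff_of_nonneg (Finset.sum_nonneg hterm) (sq_nonneg _)).mp h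
  have hstep : ∀ i < P.N, c (i + 1) = c i := by
    intro i hi
    have := (Finset.sum_eq_zero_iff_of_nonneg hterm).mp hsum i (Finset.mem_range.mpr hi)
    simpa [slope, (P.τ_sub_pos hi).ne', sub_eq_zero] using this
  intro j hj
  induction j with
  | zero => simpa using hc0
  | succ n ih => rw [hstep n hj, ih (by omega)]

lemma sqrt_energy_add_le (c e : ℕ → E) :
    √(P.energy (c + e)) ≤ √(P.energy c) + √(P.energy e) := by
  let Φ : (ℕ → E) → WithLp 2 (E × PiLp 2 (fun _ : Fin P.N => E)) := fun c =>
    WithLp.toLp 2 (c 0, WithLp.toLp 2 fun i => √(P.τ (i + 1) - P.τ i) • P.slope c i)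
  have hΦ : ∀ c, √(P.energy c) = ‖Φ c‖ := by
    intro c
    rw [← Real.sqrt_sq (norm_nonneg (Φ c)), WithLp.prod_norm_sq_eq_of_L2,
      PiLp.norm_sq_eq_of_L2, energy, Finset.sum_range, add_comm]
    simp [Φ, norm_smul, mul_pow, Real.sq_sqrt (P.τ_sub_pos _).le]
  have hadd : Φ (c + e) = Φ c + Φ e := by
    simp only [Φ, slope_add, smul_add, Pi.add_apply]
    rfl
  rw [hΦ, hΦ, hΦ, hadd]
  exact norm_add_le _ _

lemma integral_interpDeriv [CompleteSpace E] (c : ℕ → E) {t : ℝ} (ht : 0 ≤ t) :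
    ∫ s in 0..t, P.interpDeriv c s = P.interp c t - c 0 := by
  unfold interpDeriv
  rw [interp, add_sub_cancel_left, intervalIntegral.integral_finsetSum fun i _ =>
    ((integrable_indicator_iff measurableSet_Ioc).mpr
      (integrableOn_const measure_Ioc_lt_top.ne)).intervalIntegrable]
  refine Finset.sum_congr rfl fun i hi => ?_
  have := P.mono i (Finset.mem_range.mp hi)
  have := P.τ_nonneg (Finset.mem_range.mp hi).le
  rw [intervalIntegral.integral_of_le ht, setIntegral_indicator measurableSet_Ioc, Ioc_inter_Ioc,
    setIntegral_const, Real.volume_real_Ioc, ramp]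
  congr 1
  simp only [min_def, max_def]
  split_ifs <;> linarith

variable {M : ℝ → E →L[ℝ] E}

lemma intervalIntegrable_apply_interp (hM : ContinuousOn M (Icc 0 T)) (c : ℕ → E) {j : ℕ}
    (hj : j ≤ P.N) : IntervalIntegrable (fun s => M s (P.interp c s)) volume 0 (P.τ j) :=
  ((hM.clm_apply (P.continuous_interp c).continuousOn).mono (by
    rw [uIcc_of_le (P.τ_nonneg hj)]; exact Icc_subset_Icc le_rfl (P.τ_le hj))).intervalIntegrable

/-- The nodal values of `t ↦ ∫₀ᵗ M s (v s) ds` for `v` the interpolant of the nodal vector `x`;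
on `X^h` in nodal coordinates this is `Π_h Γ`. -/
def nodalVolterra (hM : ContinuousOn M (Icc 0 T)) :
    (Fin (P.N + 1) → E) →ₗ[ℝ] Fin (P.N + 1) → E where
  toFun x j := ∫ s in 0..P.τ j, M s (P.interp (fun n => x (Fin.clamp n P.N)) s)
  map_add' x y := funext fun j => by
    have hj := Nat.lt_succ_iff.mp j.isLt
    rw [show (fun n => (x + y) (Fin.clamp n P.N)) =
      (fun n => x (Fin.clamp n P.N)) + (fun n => y (Fin.clamp n P.N)) from rfl, interp_add]
    simp only [Pi.add_apply, map_add]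
    exact intervalIntegral.integral_add (P.intervalIntegrable_apply_interp hM _ hj)
      (P.intervalIntegrable_apply_interp hM _ hj)
  map_smul' a x := funext fun j => by
    rw [show (fun n => (a • x) (Fin.clamp n P.N)) = a • (fun n => x (Fin.clamp n P.N)) from rfl,
      interp_smul]
    simp only [Pi.smul_apply, map_smul, intervalIntegral.integral_smul, RingHom.id_apply]

lemma nodalVolterra_apply (hM : ContinuousOn M (Icc 0 T)) (x : Fin (P.N + 1) → E)
    (j : Fin (P.N + 1)) :
    P.nodalVolterra hM x j = ∫ s in 0..P.τ j, M s (P.interp (fun n => x (Fin.clamp n P.N)) s) :=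
  rfl

end Interpolation

end TPartition

section XSpace

variable {d : ℕ} {T : ℝ}

namespace MemX

variable {u u' : ℝ → Euc d}

lemma integrableOn (hu : MemX T u u') : IntegrableOn u' (Icc 0 T) :=
  hu.1.integrable one_le_two

lemma intervalIntegrable (hu : MemX T u u') {a b : ℝ} (ha : 0 ≤ a) (hab : a ≤ b) (hb : b ≤ T) :
    IntervalIntegrable u' volume a b :=
  (hu.integrableOn.mono_set (by rw [uIcc_of_le hab]; exact Icc_subset_Icc ha hb)).intervalIntegrable

lemma integral_eq_sub (hu : MemX T u u') {a b : ℝ} (ha : 0 ≤ a) (hab : a ≤ b) (hb : b ≤ T) :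
    ∫ s in a..b, u' s = u b - u a := by
  rw [hu.2 b ⟨ha.trans hab, hb⟩, hu.2 a ⟨ha, hab.trans hb⟩, add_sub_add_left_eq_sub,
    intervalIntegral.integral_interval_sub_left (hu.intervalIntegrable le_rfl (ha.trans hab) hb)
      (hu.intervalIntegrable le_rfl ha (hab.trans hb))]

lemma continuousOn (hu : MemX T u u') : ContinuousOn u (Icc 0 T) := by
  rcases lt_or_ge T 0 with hT | hT
  · simp [Icc_eq_empty_of_lt hT]
  · have := intervalIntegral.continuousOn_primitive_interval (a := 0) (b := T)
      (by rw [uIcc_of_le hT]; exact hu.integrableOn)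
    rw [uIcc_of_le hT] at this
    exact (continuousOn_const.add this).congr hu.2

lemma sub {v v' : ℝ → Euc d} (hu : MemX T u u') (hv : MemX T v v') :
    MemX T (fun t => u t - v t) (fun t => u' t - v' t) := by
  refine ⟨hu.1.sub hv.1, fun t ht => ?_⟩
  dsimp only
  rw [intervalIntegral.integral_sub (hu.intervalIntegrable le_rfl ht.1 ht.2)
    (hv.intervalIntegrable le_rfl ht.1 ht.2), hu.2 t ht, hv.2 t ht]
  abel

/-- By Lebesgue differentiation both are a.e. the derivative of `u`. -/
lemma ae_eq {u₂' : ℝ → Euc d} (hu : MemX T u u') (hu₂ : MemX T u u₂') :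
    ∀ᵐ t ∂volume.restrict (Ioc 0 T), u' t = u₂' t := by
  rcases lt_or_ge T 0 with hT | hT
  · simp [Ioc_eq_empty_of_le hT.le]
  have hw := (hu.intervalIntegrable le_rfl hT le_rfl).sub (hu₂.intervalIntegrable le_rfl hT le_rfl)
  have hzero : ∀ t ∈ Icc 0 T, ∫ s in 0..t, (u' s - u₂' s) = 0 := fun t ht => by
    rw [intervalIntegral.integral_sub (hu.intervalIntegrable le_rfl ht.1 ht.2)
      (hu₂.intervalIntegrable le_rfl ht.1 ht.2), sub_eq_zero]
    exact add_left_cancel ((hu.2 t ht).symm.trans (hu₂.2 t ht))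
  have hT' : ∀ᵐ t : ℝ, t ≠ T := by simp [ae_iff, measure_singleton]
  filter_upwards [ae_restrict_of_ae hw.ae_hasDerivAt_integral, ae_restrict_mem measurableSet_Ioc,
    ae_restrict_of_ae hT'] with t hderiv ht htT
  have htIoo : t ∈ Ioo 0 T := ⟨ht.1, ht.2.lt_of_ne htT⟩
  rw [uIcc_of_le hT] at hderiv
  have := (hderiv (Ioo_subset_Icc_self htIoo) 0 ⟨le_rfl, hT⟩).congr_of_eventuallyEq
    (f₁ := fun _ => (0 : Euc d)) (Filter.eventually_of_mem (Ioo_mem_nhds htIoo.1 htIoo.2)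
      fun s hs => (hzero s (Ioo_subset_Icc_self hs)).symm)
  exact sub_eq_zero.mp ((hasDerivAt_const t (0 : Euc d)).unique this).symm

end MemX

lemma memX_primitive {G : ℝ → Euc d} (hG : MemLp G 2 (volume.restrict (Icc 0 T))) :
    MemX T (fun t => ∫ s in 0..t, G s) G :=
  ⟨hG, fun t _ => by simp⟩

lemma normX_primitive (G : ℝ → Euc d) :
    normX T (fun t => ∫ s in 0..t, G s) G = L2norm T G := by
  simp [normX, innerX, L2norm]

lemma innerX_congr_right {w w' v v' e e' : ℝ → Euc d} (hT : 0 ≤ T) (h0 : v 0 = e 0)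
    (h' : ∀ᵐ t ∂volume.restrict (Ioc 0 T), v' t = e' t) :
    innerX T w w' v v' = innerX T w w' e e' := by
  rw [innerX, innerX, h0, intervalIntegral.integral_of_le hT, intervalIntegral.integral_of_le hT,
    integral_congr_ae (h'.mono fun t ht => by rw [ht])]

lemma L2norm_le_mul {v w : ℝ → Euc d} {s : ℝ} (hT : 0 ≤ T) (hs : 0 ≤ s)
    (hv : IntervalIntegrable (fun t => ‖v t‖ ^ 2) volume 0 T)
    (hwv : ∀ t ∈ Icc 0 T, ‖w t‖ ≤ s * ‖v t‖) : L2norm T w ≤ s * L2norm T v := by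
  rw [L2norm, L2norm, ← Real.sqrt_sq hs, ← Real.sqrt_mul (sq_nonneg s),
    ← intervalIntegral.integral_const_mul]
  refine Real.sqrt_le_sqrt ?_
  rw [intervalIntegral.integral_of_le hT, intervalIntegral.integral_of_le hT]
  refine integral_mono_of_nonneg (ae_of_all _ fun t => sq_nonneg _)
    ((hv.const_mul (s ^ 2)).1) ?_
  filter_upwards [ae_restrict_mem measurableSet_Ioc] with t ht
  rw [← mul_pow]
  exact pow_le_pow_left₀ (norm_nonneg _) (hwv t (Ioc_subset_Icc_self ht)) 2

namespace TPartition

variable {P : TPartition T}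

lemma memX_interp (c : ℕ → Euc d) : MemX T (P.interp c) (P.interpDeriv c) := by
  refine ⟨memLp_finsetSum _ fun _ _ => ?_, fun t ht => ?_⟩
  · exact (memLp_const _).indicator measurableSet_Ioc
  · rw [P.integral_interpDeriv c ht.1, P.interp_zero, add_sub_cancel]

lemma pwLinear_interp (c : ℕ → Euc d) : PWLinear P (P.interp c) := fun i hi =>
  ⟨c i - P.τ i • P.slope c i, P.slope c i, fun t ht => by
    rw [P.interp_of_mem_Icc c hi ht, sub_smul]; abel⟩

end TPartition

namespace PWLinear

variable {P : TPartition T} {v : ℝ → Euc d}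

lemma sub {w : ℝ → Euc d} (hv : PWLinear P v) (hw : PWLinear P w) :
    PWLinear P (fun t => v t - w t) := fun i hi => by
  obtain ⟨a, b, hab⟩ := hv i hi
  obtain ⟨a', b', hab'⟩ := hw i hi
  exact ⟨a - a', b - b', fun t ht => by dsimp only; rw [hab t ht, hab' t ht, smul_sub]; abel⟩

lemma interp_nodes (hv : PWLinear P v) {t : ℝ} (ht : t ∈ Icc 0 T) :
    P.interp (fun i => v (P.τ i)) t = v t := by
  obtain ⟨i, hi, hti⟩ := P.exists_mem_Icc_τ ht
  obtain ⟨a, b, hab⟩ := hv i hi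
  have hslope : P.slope (fun i => v (P.τ i)) i = b := by
    rw [TPartition.slope, hab _ ⟨(P.mono i hi).le, le_rfl⟩, hab _ ⟨le_rfl, (P.mono i hi).le⟩,
      add_sub_add_left_eq_sub, ← sub_smul, smul_smul, inv_mul_cancel₀ (P.τ_sub_pos hi).ne',
      one_smul]
  rw [P.interp_of_mem_Icc _ hi hti, hslope, hab t hti, hab _ ⟨le_rfl, (P.mono i hi).le⟩, add_assoc,
    ← add_smul, add_sub_cancel]

lemma memX (hv : PWLinear P v) : MemX T v (P.interpDeriv fun i => v (P.τ i)) := by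
  have h0 : (0 : ℝ) ∈ Icc 0 T := ⟨le_rfl, P.T_pos.le⟩
  refine ⟨(TPartition.memX_interp _).1, fun t ht => ?_⟩
  rw [← hv.interp_nodes ht, ← hv.interp_nodes h0]
  exact (TPartition.memX_interp _).2 t ht

end PWLinear

namespace TPartition

variable {P : TPartition T}

lemma integral_inner_interpDeriv {w : ℝ → Euc d} (hw : IntegrableOn w (Icc 0 T)) (e : ℕ → Euc d) :
    ∫ t in 0..T, ⟪w t, P.interpDeriv e t⟫ =
      ∑ i ∈ Finset.range P.N, ⟪∫ t in P.τ i..P.τ (i + 1), w t, P.slope e i⟫ := by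
  have hpiece : ∀ i < P.N, IntegrableOn (fun t => ⟪w t, P.interpDeriv e t⟫)
        (Ioc (P.τ i) (P.τ (i + 1))) ∧
      ∫ t in Ioc (P.τ i) (P.τ (i + 1)), ⟪w t, P.interpDeriv e t⟫ =
        ⟪∫ t in Ioc (P.τ i) (P.τ (i + 1)), w t, P.slope e i⟫ := by
    intro i hi
    have hwi : IntegrableOn w (Ioc (P.τ i) (P.τ (i + 1))) :=
      hw.mono_set (Ioc_subset_Icc_self.trans (P.Icc_τ_subset hi))
    have heq : EqOn (fun t => ⟪w t, P.slope e i⟫) (fun t => ⟪w t, P.interpDeriv e t⟫)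
        (Ioc (P.τ i) (P.τ (i + 1))) := fun t ht => by
      simp only [P.interpDeriv_of_mem_Ioc e hi ht]
    refine ⟨IntegrableOn.congr_fun (hwi.inner_const _) heq measurableSet_Ioc, ?_⟩
    rw [← setIntegral_congr_fun measurableSet_Ioc heq, real_inner_comm, ← integral_inner hwi]
    simp_rw [real_inner_comm]
  rw [← P.sum_integral_τ fun i hi => (intervalIntegrable_iff_integrableOn_Ioc_of_le
    (P.mono i hi).le).mpr (hpiece i hi).1]
  refine Finset.sum_congr rfl fun i hi => ?_
  have hi := Finset.mem_range.mp hi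
  rw [intervalIntegral.integral_of_le (P.mono i hi).le, intervalIntegral.integral_of_le
    (P.mono i hi).le, (hpiece i hi).2]

lemma innerX_interp {w w' : ℝ → Euc d} (hw : MemX T w w') (e : ℕ → Euc d) :
    innerX T w w' (P.interp e) (P.interpDeriv e) =
      ∑ i ∈ Finset.range P.N, ⟪w (P.τ (i + 1)) - w (P.τ i), P.slope e i⟫ + ⟪w 0, e 0⟫ := by
  rw [innerX, integral_inner_interpDeriv hw.integrableOn, P.interp_zero]
  congr 1
  refine Finset.sum_congr rfl fun i hi => ?_
  have hi := Finset.mem_range.mp hi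
  rw [hw.integral_eq_sub (P.τ_nonneg hi.le) (P.mono i hi).le (P.τ_le hi)]

lemma innerX_interp_nodes {w w' : ℝ → Euc d} (hw : MemX T w w') :
    innerX T w w' (P.interp fun i => w (P.τ i)) (P.interpDeriv fun i => w (P.τ i)) =
      P.energy fun i => w (P.τ i) := by
  rw [innerX_interp hw, energy, P.left, real_inner_self_eq_norm_sq]
  congr 1
  refine Finset.sum_congr rfl fun i hi => ?_
  have hΔ := (P.τ_sub_pos (Finset.mem_range.mp hi)).ne'
  rw [slope, real_inner_smul_right, real_inner_self_eq_norm_sq, norm_smul, mul_pow,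
    Real.norm_eq_abs, sq_abs]
  field_simp

lemma normX_eq_sqrt_energy {v v' : ℝ → Euc d} (hv : MemX T v v') (hpv : PWLinear P v) :
    normX T v v' = √(P.energy fun i => v (P.τ i)) := by
  rw [normX, innerX_congr_right P.T_pos.le (hpv.interp_nodes ⟨le_rfl, P.T_pos.le⟩).symm
    (hv.ae_eq hpv.memX), innerX_interp_nodes hv]

lemma normX_interp (c : ℕ → Euc d) : normX T (P.interp c) (P.interpDeriv c) = √(P.energy c) := by
  rw [normX_eq_sqrt_energy (memX_interp c) (pwLinear_interp c),
    energy_congr fun j hj => P.interp_τ c hj]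

/-- `u - Π_h u` vanishes at the nodes, so its derivative has mean zero on every cell, where the
derivative of a test function is constant. -/
lemma isProjX_interp {u u' : ℝ → Euc d} (hu : MemX T u u') :
    IsProjX P u u' (P.interp fun i => u (P.τ i)) (P.interpDeriv fun i => u (P.τ i)) := by
  refine ⟨memX_interp _, pwLinear_interp _, fun v v' hv hpv => ?_⟩
  have herr : ∀ j ≤ P.N, u (P.τ j) - P.interp (fun i => u (P.τ i)) (P.τ j) = 0 := fun j hj => by
    rw [P.interp_τ _ hj, sub_self]
  rw [innerX_congr_right P.T_pos.le (hpv.interp_nodes ⟨le_rfl, P.T_pos.le⟩).symm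
    (hv.ae_eq hpv.memX), innerX_interp (hu.sub (memX_interp _))]
  have h0 : u 0 - P.interp (fun i => u (P.τ i)) 0 = 0 := by
    simpa [P.left] using herr 0 (Nat.zero_le _)
  rw [Finset.sum_eq_zero fun i hi => ?_, h0, inner_zero_left, add_zero]
  have hi := Finset.mem_range.mp hi
  rw [herr i hi.le, herr (i + 1) hi, sub_self, inner_zero_left]

lemma _root_.IsProjX.eq_interp {u u' p p' : ℝ → Euc d} (hu : MemX T u u') (hp : IsProjX P u u' p p')
    {t : ℝ} (ht : t ∈ Icc 0 T) : p t = P.interp (fun i => u (P.τ i)) t := by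
  have hw := hu.sub hp.1
  have hzero := P.eq_zero_of_energy_eq_zero <|
    (innerX_interp_nodes hw).symm.trans (hp.2.2 _ _ (memX_interp _) (pwLinear_interp _))
  rw [← hp.2.1.interp_nodes ht]
  exact congrFun (interp_congr fun j hj => (sub_eq_zero.mp (hzero j hj)).symm) t

lemma forall_isProjX_sub_eq_iff {u u' v ρ : ℝ → Euc d} (hu : MemX T u u') (hv : PWLinear P v)
    (hρ : PWLinear P ρ) :
    (∀ p p', IsProjX P u u' p p' → ∀ t ∈ Icc 0 T, v t - p t = ρ t) ↔
      ∀ j ≤ P.N, v (P.τ j) - u (P.τ j) = ρ (P.τ j) := by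
  refine ⟨fun h j hj => ?_, fun h p p' hp t ht => ?_⟩
  · simpa [P.interp_τ _ hj] using h _ _ (isProjX_interp hu) (P.τ j) ⟨P.τ_nonneg hj, P.τ_le hj⟩
  · rw [hp.eq_interp hu ht, ← hv.interp_nodes ht, ← hρ.interp_nodes ht, ← Pi.sub_apply,
      ← interp_sub]
    exact congrFun (interp_congr h) t

/-- On each cell the slope of the interpolant is the mean of `u'`, whose squared norm is at most
the mean of `‖u'‖ ^ 2` (Jensen). -/
lemma sqrt_energy_nodes_le_normX {u u' : ℝ → Euc d} (hu : MemX T u u') :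
    √(P.energy fun i => u (P.τ i)) ≤ normX T u u' := by
  refine Real.sqrt_le_sqrt ?_
  rw [innerX, energy, P.left, real_inner_self_eq_norm_sq]
  simp_rw [real_inner_self_eq_norm_sq]
  gcongr
  have hsq : IntegrableOn (fun t => ‖u' t‖ ^ 2) (Icc 0 T) := hu.1.integrable_norm_pow two_ne_zero
  rw [← P.sum_integral_τ fun i hi => (intervalIntegrable_iff_integrableOn_Icc_of_le
    (P.mono i hi).le).mpr (hsq.mono_set (P.Icc_τ_subset hi))]
  refine Finset.sum_le_sum fun i hi => ?_
  have hi := Finset.mem_range.mp hi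
  have hΔ := P.τ_sub_pos hi
  have hjensen := norm_intervalIntegral_sq_le (P.mono i hi) (hu.1.mono_measure
    (Measure.restrict_mono (Ioc_subset_Icc_self.trans (P.Icc_τ_subset hi)) le_rfl))
  rw [hu.integral_eq_sub (P.τ_nonneg hi.le) (P.mono i hi).le (P.τ_le hi)] at hjensen
  rw [slope, norm_smul, mul_pow, norm_inv, Real.norm_eq_abs, abs_of_pos hΔ]
  calc (P.τ (i + 1) - P.τ i) * ((P.τ (i + 1) - P.τ i)⁻¹ ^ 2 * ‖u (P.τ (i + 1)) - u (P.τ i)‖ ^ 2)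
      = (P.τ (i + 1) - P.τ i)⁻¹ * ‖u (P.τ (i + 1)) - u (P.τ i)‖ ^ 2 := by field_simp
    _ ≤ ∫ t in P.τ i..P.τ (i + 1), ‖u' t‖ ^ 2 := by
      rw [inv_mul_le_iff₀ hΔ]; exact hjensen

lemma sqrt_energy_nodalVolterra_le (P : TPartition T) {M : ℝ → Euc d →L[ℝ] Euc d}
    (hM : ContinuousOn M (Icc 0 T)) {s 𝔠t : ℝ} (hMs : ∀ t ∈ Icc 0 T, ‖M t‖ ≤ s)
    (hct : IsEmbL2 d T 𝔠t) (x : Fin (P.N + 1) → Euc d) :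
    √(P.energy fun n => P.nodalVolterra hM x (Fin.clamp n P.N)) ≤
      𝔠t * s * √(P.energy fun n => x (Fin.clamp n P.N)) := by
  have hs : 0 ≤ s := (norm_nonneg _).trans (hMs 0 ⟨le_rfl, P.T_pos.le⟩)
  set v := P.interp fun n => x (Fin.clamp n P.N)
  have hMv : MemLp (fun t => M t (v t)) 2 (volume.restrict (Icc 0 T)) :=
    (hM.clm_apply (P.continuous_interp _).continuousOn).memLp_Icc 2
  calc √(P.energy fun n => P.nodalVolterra hM x (Fin.clamp n P.N))
      = √(P.energy fun j => ∫ r in 0..P.τ j, M r (v r)) := by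
        rw [energy_congr (e := fun j => ∫ r in 0..P.τ j, M r (v r))
          fun j hj => by rw [Fin.clamp_of_le hj, nodalVolterra_apply]]
    _ ≤ normX T (fun t => ∫ r in 0..t, M r (v r)) (fun t => M t (v t)) :=
        sqrt_energy_nodes_le_normX (P := P) (u := fun t => ∫ r in 0..t, M r (v r))
          (memX_primitive hMv)
    _ = L2norm T (fun t => M t (v t)) := normX_primitive _
    _ ≤ s * L2norm T v := L2norm_le_mul P.T_pos.le hs
        (((P.continuous_interp _).norm.pow 2).intervalIntegrable _ _)
        fun t ht => (M t).le_of_opNorm_le (hMs t ht) (v t)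
    _ ≤ s * (𝔠t * normX T v (P.interpDeriv fun n => x (Fin.clamp n P.N))) :=
        mul_le_mul_of_nonneg_left (hct.1 _ _ (memX_interp _)) hs
    _ = 𝔠t * s * √(P.energy fun n => x (Fin.clamp n P.N)) := by rw [normX_interp]; ring

theorem exists_unique_pwLinear_sub_volterra_eq (P : TPartition T) {M : ℝ → Euc d →L[ℝ] Euc d}
    (hM : ContinuousOn M (Icc 0 T)) {s 𝔠t : ℝ} (hMs : ∀ t ∈ Icc 0 T, ‖M t‖ ≤ s)
    (hct : IsEmbL2 d T 𝔠t) (hκ : 𝔠t * s < 1) (b : ℕ → Euc d) :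
    ∃ c : ℕ → Euc d,
      (∀ j ≤ P.N, P.interp c (P.τ j) - ∫ r in 0..P.τ j, M r (P.interp c r) = b j) ∧
      (∀ v : ℝ → Euc d, PWLinear P v →
        (∀ j ≤ P.N, v (P.τ j) - ∫ r in 0..P.τ j, M r (v r) = b j) →
        ∀ t ∈ Icc 0 T, v t = P.interp c t) ∧
      √(P.energy c) ≤ √(P.energy b) / (1 - 𝔠t * s) := by
  have hN_eq_zero : ∀ x : Fin (P.N + 1) → Euc d,
      √(P.energy fun n => x (Fin.clamp n P.N)) = 0 → x = 0 := fun x hx => funext fun j => by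
    have hj := Nat.lt_succ_iff.mp j.isLt
    simpa [Fin.clamp_of_le hj] using
      P.eq_zero_of_energy_eq_zero ((Real.sqrt_eq_zero (P.energy_nonneg _)).mp hx) j hj
  obtain ⟨x, hx, hx_unique, hx_le⟩ := (P.nodalVolterra hM).exists_unique_sub_apply_eq_of_contracting
    hκ (fun _ => Real.sqrt_nonneg _) hN_eq_zero (fun x y => P.sqrt_energy_add_le _ _)
    (P.sqrt_energy_nodalVolterra_le hM hMs hct) (fun j => b j)
  refine ⟨fun n => x (Fin.clamp n P.N), fun j hj => ?_, fun v hv hvb t ht => ?_, ?_⟩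
  · rw [P.interp_τ _ hj, Fin.clamp_of_le hj]
    exact congrFun hx ⟨j, Nat.lt_succ_of_le hj⟩
  · let x' : Fin (P.N + 1) → Euc d := fun j => v (P.τ j)
    have hinterp : (P.interp fun n => x' (Fin.clamp n P.N)) = P.interp fun i => v (P.τ i) :=
      interp_congr fun j hj => by rw [Fin.clamp_of_le hj]
    have hx' : x' - P.nodalVolterra hM x' = fun j : Fin (P.N + 1) => b j := funext fun j => by
      have hj := Nat.lt_succ_iff.mp j.isLt
      rw [Pi.sub_apply, nodalVolterra_apply, ← hvb j hj, hinterp]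
      congr 1
      refine intervalIntegral.integral_congr fun r hr => ?_
      rw [uIcc_of_le (P.τ_nonneg hj)] at hr
      simp only [hv.interp_nodes ⟨hr.1, hr.2.trans (P.τ_le hj)⟩]
    rw [← hv.interp_nodes ht, ← hinterp, hx_unique x' hx']
  · beta_reduce at hx_le
    rwa [energy_congr (c := fun n => b (Fin.clamp n P.N)) (e := b)
      fun j hj => by rw [Fin.clamp_of_le hj]] at hx_le

end TPartition

lemma IsEmbC.pos {𝔠 : ℝ} (hT : 0 ≤ T) (hc : IsEmbC d T 𝔠) : 0 < 𝔠 := by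
  rcases Nat.eq_zero_or_pos d with rfl | hd
  · have hnorm : ∀ x : Euc 0, ‖x‖ = 0 := fun x => by rw [Subsingleton.elim x 0, norm_zero]
    have : 𝔠 ≤ 𝔠 - 1 := hc.2 fun u u' _ t _ => by simp [normX, innerX, hnorm]
    linarith
  · let e : Euc d := EuclideanSpace.single ⟨0, hd⟩ 1
    have hmem : MemX T (fun _ => e) 0 := ⟨MemLp.zero, fun t _ => by simp⟩
    have hnorm : normX T (fun _ => e) 0 = 1 := by
      simp [normX, innerX, e]
    exact one_pos.trans_le (by simpa [hnorm, e] using hc.1 _ _ hmem 0 ⟨le_rfl, hT⟩)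

end XSpace

theorem lsfem_fixed_point_lemma_general
    {d : ℕ} {T : ℝ}
    (F : Euc d → Euc d) (f : ℝ → Euc d) (g : Euc d)
    (𝔠 𝔠t : ℝ) (hc : IsEmbC d T 𝔠) (hct : IsEmbL2 d T 𝔠t)
    -- (A1)
    (hF : ContDiff ℝ 3 F)
    (y y' : ℝ → Euc d) (hy : IsStrongSol T F f g y y')
    -- (A2)
    (r : ℝ)
    (B : Set (Euc d)) (hB : B = {p : Euc d | ∃ t ∈ Icc (0:ℝ) T, ‖p - y t‖ < 𝔠 * r})
    (hbar : ℝ)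
    (hsmall : 𝔠t * sSup ((fun z => ‖fderiv ℝ F z‖) '' B) < 1) :
    ∀ P : TPartition T, P.mesh < hbar →
      ∀ yh yh' : ℝ → Euc d, IsLSFEMSol T F f g P yh yh' →
        normX T (fun t => yh t - y t) (fun t => yh' t - y' t) < r →
        ∀ wh wh' : ℝ → Euc d,
          IsProjX P (fun t => g + ∫ s in (0:ℝ)..t, (F (yh s) + f s))
            (fun t => F (yh t) + f t) wh wh' →
          ∃ vh vh' : ℝ → Euc d,
            (MemX T vh vh' ∧ PWLinear P vh ∧
              ∀ pΓ pΓ' : ℝ → Euc d,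
                IsProjX P (fun t => ∫ s in (0:ℝ)..t, fderiv ℝ F (yh s) (vh s))
                  (fun t => fderiv ℝ F (yh t) (vh t)) pΓ pΓ' →
                ∀ t ∈ Icc (0:ℝ) T, vh t - pΓ t = yh t - wh t) ∧
            (∀ uh uh' : ℝ → Euc d,
              MemX T uh uh' → PWLinear P uh →
              (∀ pΓ pΓ' : ℝ → Euc d,
                IsProjX P (fun t => ∫ s in (0:ℝ)..t, fderiv ℝ F (yh s) (uh s))
                  (fun t => fderiv ℝ F (yh t) (uh t)) pΓ pΓ' →
                ∀ t ∈ Icc (0:ℝ) T, uh t - pΓ t = yh t - wh t) →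
              ∀ t ∈ Icc (0:ℝ) T, uh t = vh t) ∧
            normX T vh vh' ≤
              normX T (fun t => yh t - wh t) (fun t => yh' t - wh' t) /
                (1 - 𝔠t * sSup ((fun z => ‖fderiv ℝ F z‖) '' B)) := by
  intro P _ yh yh' hyh hyh_near wh wh' hwh
  have hDF : Continuous (fderiv ℝ F) := hF.continuous_fderiv (by norm_num)
  have hyh_mem : ∀ t ∈ Icc 0 T, yh t ∈ B := fun t ht => hB ▸ ⟨t, ht,
    (hc.1 _ _ (hyh.1.sub hy.1) t ht).trans_lt (mul_lt_mul_of_pos_left hyh_near (hc.pos P.T_pos.le))⟩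
  have hM_le : ∀ t ∈ Icc 0 T, ‖fderiv ℝ F (yh t)‖ ≤ sSup ((fun z => ‖fderiv ℝ F z‖) '' B) :=
    fun t ht => le_csSup (hB ▸ bddAbove_image_tube hy.1.continuousOn hDF.norm _)
      ⟨yh t, hyh_mem t ht, rfl⟩
  have hM : ContinuousOn (fun t => fderiv ℝ F (yh t)) (Icc 0 T) :=
    hDF.comp_continuousOn hyh.1.continuousOn
  have hΓ : ∀ v : ℝ → Euc d, ContinuousOn v (Icc 0 T) →
      MemX T (fun t => ∫ s in 0..t, fderiv ℝ F (yh s) (v s)) (fun t => fderiv ℝ F (yh t) (v t)) :=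
    fun v hv => memX_primitive ((hM.clm_apply hv).memLp_Icc 2)
  have hρ : PWLinear P (fun t => yh t - wh t) := hyh.2.1.sub hwh.2.1
  obtain ⟨c, hc_sol, hc_unique, hc_le⟩ := P.exists_unique_pwLinear_sub_volterra_eq hM hM_le hct
    hsmall fun j => yh (P.τ j) - wh (P.τ j)
  refine ⟨P.interp c, P.interpDeriv c, ⟨TPartition.memX_interp c, TPartition.pwLinear_interp c, ?_⟩,
    fun uh _ huh hpuh hsol => ?_, ?_⟩
  · exact (TPartition.forall_isProjX_sub_eq_iff (hΓ _ (P.continuous_interp c).continuousOn)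
      (TPartition.pwLinear_interp c) hρ).mpr hc_sol
  · exact hc_unique uh hpuh ((TPartition.forall_isProjX_sub_eq_iff (hΓ _ huh.continuousOn) hpuh
      hρ).mp hsol)
  · rw [TPartition.normX_interp, TPartition.normX_eq_sqrt_energy (hyh.1.sub hwh.1) hρ]
    exact hc_le

/-- Lemma 3.5: under (A1), (A2) and `𝔠̃ · sup_{z∈𝔅} ‖DF(z)‖_op < 1`, there is a unique
`v̂^h ∈ X^h` with `v̂^h − Π_h Γ(·;v̂^h) = y_*^h − w_*^h[y_*^h]`, and it satisfies
`‖v̂^h‖_X ≤ ‖y_*^h − w_*^h[y_*^h]‖_X / (1 − 𝔠̃ · sup_{z∈𝔅} ‖DF(z)‖_op)`. -/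
theorem lsfem_fixed_point_lemma
    {d : ℕ} {T : ℝ} (hT : 0 < T)
    (F : Euc d → Euc d) (f f' : ℝ → Euc d) (g : Euc d)
    (𝔠 𝔠t : ℝ) (hc : IsEmbC d T 𝔠) (hct : IsEmbL2 d T 𝔠t)
    -- (A1)
    (hf : MemX T f f') (hF : ContDiff ℝ 3 F)
    (y y' : ℝ → Euc d) (hy : IsStrongSol T F f g y y')
    (hyuniq : ∀ z z' : ℝ → Euc d, IsStrongSol T F f g z z' → ∀ t ∈ Icc (0:ℝ) T, z t = y t)
    -- (A2)
    (hDFy : sSup ((fun t => ‖fderiv ℝ F (y t)‖) '' Icc (0:ℝ) T) < A2bound T 𝔠t)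
    (r : ℝ) (hr : 0 < r)
    (B : Set (Euc d)) (hB : B = {p : Euc d | ∃ t ∈ Icc (0:ℝ) T, ‖p - y t‖ < 𝔠 * r})
    (hbar : ℝ) (hhbar : 0 < hbar)
    (hbar_spec : ∀ P : TPartition T, P.mesh < hbar →
      ∃ yh yh' : ℝ → Euc d,
        (IsLSFEMSol T F f g P yh yh' ∧
          normX T (fun t => yh t - y t) (fun t => yh' t - y' t) < r) ∧
        ∀ zh zh' : ℝ → Euc d, IsLSFEMSol T F f g P zh zh' →
          normX T (fun t => zh t - y t) (fun t => zh' t - y' t) < r →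
          ∀ t ∈ Icc (0:ℝ) T, zh t = yh t)
    (hLip : ∃ L : ℝ, 0 ≤ L ∧ (∀ p ∈ B, ∀ q ∈ B, ‖F p - F q‖ ≤ L * ‖p - q‖) ∧
      L * T / Real.sqrt 2 < 1)
    (hDFB : sSup ((fun z => ‖fderiv ℝ F z‖) '' B) < 1 / 𝔠t)
    (hsmall : 𝔠t * sSup ((fun z => ‖fderiv ℝ F z‖) '' B) < 1) :
    ∀ P : TPartition T, P.mesh < hbar →
      ∀ yh yh' : ℝ → Euc d, IsLSFEMSol T F f g P yh yh' →
        normX T (fun t => yh t - y t) (fun t => yh' t - y' t) < r →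
        ∀ wh wh' : ℝ → Euc d,
          IsProjX P (fun t => g + ∫ s in (0:ℝ)..t, (F (yh s) + f s))
            (fun t => F (yh t) + f t) wh wh' →
          ∃ vh vh' : ℝ → Euc d,
            (MemX T vh vh' ∧ PWLinear P vh ∧
              ∀ pΓ pΓ' : ℝ → Euc d,
                IsProjX P (fun t => ∫ s in (0:ℝ)..t, fderiv ℝ F (yh s) (vh s))
                  (fun t => fderiv ℝ F (yh t) (vh t)) pΓ pΓ' →
                ∀ t ∈ Icc (0:ℝ) T, vh t - pΓ t = yh t - wh t) ∧
            (∀ uh uh' : ℝ → Euc d,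
              MemX T uh uh' → PWLinear P uh →
              (∀ pΓ pΓ' : ℝ → Euc d,
                IsProjX P (fun t => ∫ s in (0:ℝ)..t, fderiv ℝ F (yh s) (uh s))
                  (fun t => fderiv ℝ F (yh t) (uh t)) pΓ pΓ' →
                ∀ t ∈ Icc (0:ℝ) T, uh t - pΓ t = yh t - wh t) →
              ∀ t ∈ Icc (0:ℝ) T, uh t = vh t) ∧
            normX T vh vh' ≤
              normX T (fun t => yh t - wh t) (fun t => yh' t - wh' t) /
                (1 - 𝔠t * sSup ((fun z => ‖fderiv ℝ F z‖) '' B)) :=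
  lsfem_fixed_point_lemma_general F f g 𝔠 𝔠t hc hct hF y y' hy r B hB hbar hsmall
end
end

section
/- Let F : ℝ^d → ℝ^d be C¹, f ∈ L²(0,T;ℝ^d), g ∈ ℝ^d. For u, v ∈ X define Q(u,v;f,g) = ∫₀ᵀ ⟨u'(t) − F(u(t)) − f(t), DF(u(t)) v(t)⟩ dt + ∫₀ᵀ ⟨F(u(t)) + f(t), v'(t)⟩ dt + ⟨g, v(0)⟩, and define f̃(u)(t) = −F(u(t)) − f(t) − ∫ₜᵀ [DF(u(s))]ᵀ (u'(s) − F(u(s)) − f(s)) ds and g̃(u) = −g − ∫₀ᵀ [DF(u(s))]ᵀ (u'(s) − F(u(s)) − f(s)) ds. Then for all u, v ∈ X: Q(u,v;f,g) + ∫₀ᵀ ⟨f̃(u)(t), v'(t)⟩ dt + ⟨g̃(u), v(0)⟩ = 0. -/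
open MeasureTheory Set
open scoped RealInnerProductSpace

noncomputable section

/-!
Write `w = u' - F(u) - f` and `q = DF(u)ᵀ w`. By the definition of the adjoint the first term of
`Q` is `∫₀ᵀ ⟨q, v⟩`, and after cancelling `F(u) + f` and `g` the left-hand side becomes
`∫₀ᵀ ⟨q, v⟩ - ∫₀ᵀ ⟨G, v'⟩ - ⟨G(0), v(0)⟩` with `G(t) = ∫ₜᵀ q`. This vanishes by integration by
parts, as `G' = -q` and `G(T) = 0`; since `v` is merely absolutely continuous, the integration by
parts is proved by Fubini on the triangle `{0 < t < s ≤ T}`.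
-/

theorem integral_Ioc_integral_Ioc_swap {E : Type*} [NormedAddCommGroup E] [NormedSpace ℝ E]
    {a b : ℝ} {k : ℝ → ℝ → E}
    (hk : Integrable (Function.uncurry k)
      ((volume.restrict (Ioc a b)).prod (volume.restrict (Ioc a b)))) :
    ∫ t in Ioc a b, ∫ s in Ioc t b, k t s = ∫ s in Ioc a b, ∫ t in Ioc a s, k t s := by
  set H : ℝ → ℝ → E := fun t s => (Ioi t).indicator (k t) s with hH
  have hH' : ∀ t s, H t s = (Iio s).indicator (fun t => k t s) t := fun t s => by
    simp [hH, indicator]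
  have hHint : Integrable (Function.uncurry H)
      ((volume.restrict (Ioc a b)).prod (volume.restrict (Ioc a b))) := by
    have : Function.uncurry H = {p : ℝ × ℝ | p.1 < p.2}.indicator (Function.uncurry k) := by
      ext ⟨t, s⟩; simp [hH, indicator]
    rw [this]
    exact hk.indicator (measurableSet_lt measurable_fst measurable_snd)
  calc ∫ t in Ioc a b, ∫ s in Ioc t b, k t s
      = ∫ t in Ioc a b, ∫ s in Ioc a b, H t s := by
        refine setIntegral_congr_fun measurableSet_Ioc fun t ht => ?_
        rw [setIntegral_indicator measurableSet_Ioi, Ioc_inter_Ioi, sup_eq_right.2 ht.1.le]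
    _ = ∫ s in Ioc a b, ∫ t in Ioc a b, H t s := integral_integral_swap hHint
    _ = ∫ s in Ioc a b, ∫ t in Ioc a s, k t s := by
        refine setIntegral_congr_fun measurableSet_Ioc fun s hs => ?_
        have hIoo : Ioc a b ∩ Iio s = Ioo a s := by
          ext t; simp only [mem_inter_iff, mem_Ioc, mem_Iio, mem_Ioo]; grind
        simp_rw [hH']
        rw [setIntegral_indicator measurableSet_Iio, hIoo, integral_Ioc_eq_integral_Ioo]

theorem MeasureTheory.IntegrableOn.continuousOn_bilin {F G H : Type*}
    [NormedAddCommGroup F] [NormedSpace ℝ F] [NormedAddCommGroup G] [NormedSpace ℝ G]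
    [NormedAddCommGroup H] [NormedSpace ℝ H]
    (B : F →L[ℝ] G →L[ℝ] H) {K : Set ℝ} {f : ℝ → F} {g : ℝ → G}
    (hg : IntegrableOn g K) (hf : ContinuousOn f K) (hK : IsCompact K) :
    IntegrableOn (fun x => B (f x) (g x)) K := by
  obtain ⟨C, hC⟩ := hK.exists_bound_of_continuousOn hf
  exact B.integrable_of_bilin_of_bdd_left C (hf.aestronglyMeasurable hK.measurableSet)
    (ae_restrict_of_forall_mem hK.measurableSet hC) hg

theorem continuousOn_Icc_of_eq_add_integral {F : Type*} [NormedAddCommGroup F] [NormedSpace ℝ F]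
    {a b : ℝ} {v v' : ℝ → F} (hv' : IntegrableOn v' (Icc a b))
    (hv : ∀ t ∈ Icc a b, v t = v a + ∫ s in a..t, v' s) : ContinuousOn v (Icc a b) := by
  rcases lt_or_ge b a with hba | hab
  · simp [Icc_eq_empty_of_lt hba]
  rw [← uIcc_of_le hab] at hv' ⊢
  exact (continuousOn_const.add (intervalIntegral.continuousOn_primitive_interval hv')).congr
    fun t ht => hv t (uIcc_of_le hab ▸ ht)

section InnerProductSpace

variable {E : Type*} [NormedAddCommGroup E] [InnerProductSpace ℝ E] [CompleteSpace E]

theorem integral_inner_integral_Ioc_swap {a b : ℝ} {q w : ℝ → E}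
    (hq : IntegrableOn q (Ioc a b)) (hw : IntegrableOn w (Ioc a b)) :
    ∫ t in Ioc a b, ⟪∫ s in Ioc t b, q s, w t⟫ = ∫ s in Ioc a b, ⟪q s, ∫ t in Ioc a s, w t⟫ := by
  have hk : Integrable (fun p : ℝ × ℝ => ⟪q p.2, w p.1⟫)
      ((volume.restrict (Ioc a b)).prod (volume.restrict (Ioc a b))) :=
    hw.op_fst_snd (op := fun x y : E => ⟪y, x⟫) (by fun_prop)
      ⟨1, fun x y => by simpa [mul_comm] using norm_inner_le_norm (𝕜 := ℝ) y x⟩ hq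
  calc ∫ t in Ioc a b, ⟪∫ s in Ioc t b, q s, w t⟫
      = ∫ t in Ioc a b, ∫ s in Ioc t b, ⟪q s, w t⟫ := by
        refine setIntegral_congr_fun measurableSet_Ioc fun t ht => ?_
        simp_rw [real_inner_comm (w t)]
        exact (integral_inner (hq.mono_set (Ioc_subset_Ioc_left ht.1.le)) (w t)).symm
    _ = ∫ s in Ioc a b, ∫ t in Ioc a s, ⟪q s, w t⟫ := integral_Ioc_integral_Ioc_swap hk
    _ = ∫ s in Ioc a b, ⟪q s, ∫ t in Ioc a s, w t⟫ :=
        setIntegral_congr_fun measurableSet_Ioc fun s hs =>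
          integral_inner (hw.mono_set (Ioc_subset_Ioc_right hs.2)) (q s)

/-- Integration by parts against the tail integral `t ↦ ∫ₜᵇ q`, which vanishes at `b`. -/
theorem integral_inner_integral_eq_sub {a b : ℝ} (hab : a ≤ b) {q v v' : ℝ → E}
    (hq : IntegrableOn q (Icc a b)) (hv' : IntegrableOn v' (Icc a b))
    (hv : ∀ t ∈ Icc a b, v t = v a + ∫ s in a..t, v' s) :
    ∫ t in a..b, ⟪∫ s in t..b, q s, v' t⟫ = (∫ t in a..b, ⟪q t, v t⟫) - ⟪∫ s in a..b, q s, v a⟫ := by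
  have hqv : IntegrableOn (fun t => ⟪q t, v t⟫) (Icc a b) :=
    hq.continuousOn_bilin (innerSL ℝ).flip (continuousOn_Icc_of_eq_add_integral hv' hv)
      isCompact_Icc
  have hq' : IntegrableOn q (Ioc a b) := hq.mono_set Ioc_subset_Icc_self
  simp only [intervalIntegral.integral_of_le hab]
  calc ∫ t in Ioc a b, ⟪∫ s in t..b, q s, v' t⟫
      = ∫ t in Ioc a b, ⟪∫ s in Ioc t b, q s, v' t⟫ :=
        setIntegral_congr_fun measurableSet_Ioc fun t ht => by
          rw [intervalIntegral.integral_of_le ht.2]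
    _ = ∫ s in Ioc a b, ⟪q s, ∫ t in Ioc a s, v' t⟫ :=
        integral_inner_integral_Ioc_swap hq' (hv'.mono_set Ioc_subset_Icc_self)
    _ = ∫ s in Ioc a b, (⟪q s, v s⟫ - ⟪q s, v a⟫) :=
        setIntegral_congr_fun measurableSet_Ioc fun s hs => by
          rw [← intervalIntegral.integral_of_le hs.1.le, ← inner_sub_right,
            hv s (Ioc_subset_Icc_self hs), add_sub_cancel_left]
    _ = (∫ t in Ioc a b, ⟪q t, v t⟫) - ⟪∫ s in Ioc a b, q s, v a⟫ := by
        rw [integral_sub (hqv.mono_set Ioc_subset_Icc_self) (hq'.inner_const (v a))]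
        simp_rw [real_inner_comm (v a)]
        rw [integral_inner hq']

end InnerProductSpace

/-- Identity (Eq_G_identity): for all `u, v ∈ X`,
`Q(u,v;f,g) + ∫₀ᵀ ⟨f̃(u)(t), v'(t)⟩ dt + ⟨g̃(u), v(0)⟩ = 0`. -/
theorem lsfem_Q_identity
    {d : ℕ} {T : ℝ} (hT : 0 < T)
    (F : Euc d → Euc d) (hF : ContDiff ℝ 1 F)
    (f : ℝ → Euc d) (hf : MemLp f 2 (volume.restrict (Icc (0:ℝ) T)))
    (g : Euc d)
    (u u' v v' : ℝ → Euc d) (hu : MemX T u u') (hv : MemX T v v') :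
    ((∫ t in (0:ℝ)..T, ⟪u' t - F (u t) - f t, fderiv ℝ F (u t) (v t)⟫) +
      (∫ t in (0:ℝ)..T, ⟪F (u t) + f t, v' t⟫) + ⟪g, v 0⟫) +
    (∫ t in (0:ℝ)..T,
      ⟪-F (u t) - f t - ∫ s in t..T,
          (ContinuousLinearMap.adjoint (fderiv ℝ F (u s))) (u' s - F (u s) - f s),
        v' t⟫) +
    ⟪-g - ∫ s in (0:ℝ)..T,
        (ContinuousLinearMap.adjoint (fderiv ℝ F (u s))) (u' s - F (u s) - f s),
      v 0⟫ = 0 := by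
  set q : ℝ → Euc d := fun s =>
    ContinuousLinearMap.adjoint (fderiv ℝ F (u s)) (u' s - F (u s) - f s)
  have hIcc : uIcc 0 T = Icc 0 T := uIcc_of_le hT.le
  have hu' : IntegrableOn u' (Icc 0 T) := hu.1.integrable one_le_two
  have hv' : IntegrableOn v' (Icc 0 T) := hv.1.integrable one_le_two
  have hu_cont : ContinuousOn u (Icc 0 T) := continuousOn_Icc_of_eq_add_integral hu' hu.2
  have hFu : ContinuousOn (fun t => F (u t)) (Icc 0 T) := hF.continuous.comp_continuousOn hu_cont
  have hw : IntegrableOn (fun s => u' s - F (u s) - f s) (Icc 0 T) :=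
    (hu'.sub (hFu.integrableOn_compact isCompact_Icc)).sub (hf.integrable one_le_two)
  have hDF : ContinuousOn (fun s => ContinuousLinearMap.adjoint (fderiv ℝ F (u s))) (Icc 0 T) :=
    (ContinuousLinearMap.adjoint.continuous.comp (hF.continuous_fderiv one_ne_zero))
      |>.comp_continuousOn hu_cont
  have hq : IntegrableOn q (Icc 0 T) :=
    hw.continuousOn_bilin (ContinuousLinearMap.id ℝ (Euc d →L[ℝ] Euc d)) hDF isCompact_Icc
  have hG : ContinuousOn (fun t => ∫ s in t..T, q s) (Icc 0 T) := by
    rw [← hIcc] at hq ⊢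
    exact intervalIntegral.continuousOn_primitive_interval_left hq
  have hFf : IntervalIntegrable (fun t => ⟪F (u t) + f t, v' t⟫) volume 0 T := by
    refine IntegrableOn.intervalIntegrable (hIcc ▸ ?_)
    simp_rw [inner_add_left]
    exact (hv'.continuousOn_bilin (innerSL ℝ) hFu isCompact_Icc).add
      (memLp_one_iff_integrable.1 ((innerSL ℝ).memLp_of_bilin 1 hf hv.1))
  have hGv' : IntervalIntegrable (fun t => ⟪∫ s in t..T, q s, v' t⟫) volume 0 T :=
    IntegrableOn.intervalIntegrable (hIcc ▸ hv'.continuousOn_bilin (innerSL ℝ) hG isCompact_Icc)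
  have h_adjoint : ∀ t, ⟪u' t - F (u t) - f t, fderiv ℝ F (u t) (v t)⟫ = ⟪q t, v t⟫ := fun t =>
    (ContinuousLinearMap.adjoint_inner_left _ _ _).symm
  have h_split : ∀ t, ⟪-F (u t) - f t - ∫ s in t..T, q s, v' t⟫ =
      -(⟪F (u t) + f t, v' t⟫ + ⟪∫ s in t..T, q s, v' t⟫) := fun t => by
    rw [← inner_add_left, ← inner_neg_left, neg_add', neg_add']
  simp_rw [h_adjoint, h_split]
  rw [intervalIntegral.integral_neg, intervalIntegral.integral_add hFf hGv',
    integral_inner_integral_eq_sub hT.le hq hv' hv.2, inner_sub_left, inner_neg_left]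
  ring
end
end
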